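/- arXiv:2402.15912 — 2 statements merged into one kernel-verified Lean document; each statement's English description precedes it below -/
import Mathlib

section
/- Let d_S = d_A = 2, fix q = 1/2 and a utility u with u(0) = 0 such that Z = u((ε₂ − ε₁)/2) − u(−(ε₂ − ε₁)/2) = 0, and set X = u(ε₂ − ε₁), Y = u(ε₂ − ε₁) − u(−(ε₂ − ε₁)); assume 2X > Y > 0. For the Werner state ρ_SA = ((1 − z)/4) I₄ + z |ψ⟩⟨ψ| with |ψ⟩ = (|ε₁⟩⊗|0⟩ + |ε₂⟩⊗|1⟩)/√2 and z ∈ [0,1], the maximum daemonic gain satisfies δ𝓤(ρ_SA) = 0 if z ≤ z₀ := 2X/Y − 1, and δ𝓤(ρ_SA) > 0 if z > z₀. -/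
/-!
With `q = 1/2` and `Z = 0`, the coherent contributions to `⟨u(w)⟩_{ρ,U}` of a qubit all carry
the same weight and cancel by unitarity of `U`, so only the populations `p₁ = ⟨ε₁|ρ|ε₁⟩` and
`p₂` matter: `𝓤(ρ) = max(p₂ X + p₁ (X - Y), 0)`, the optimal unitary being the identity or the
swap of the two eigenvectors.

For the Werner state the marginal is `I/2`, so `𝓤(ρ_S) = X - Y/2`. Measuring the ancilla in a
basis `{|a⟩}` gives `p_a = 1/2` and conditional populations `(1 - z)/2 + z s_a`, where
`s_a = |⟨a|b₀⟩|²` and `s₀ + s₁ = 1`; the daemonic utility is the average of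
`max(X - ((1 - z)/2 + z s_a) Y, 0)`. If `(1 + z) Y ≤ 2X` neither maximum is clipped and the
average is `X - Y/2` for every basis; otherwise the basis `{|b₁⟩, |b₀⟩}` (`s = (0, 1)`) clips
the second term and beats `X - Y/2`.
-/

open Matrix BigOperators Finset Kronecker
open scoped ComplexOrder

noncomputable section

namespace Daemonic

/-- The outer product `|x⟩⟨y|` as a matrix. -/
def ketbra {ι : Type*} [Fintype ι] (x y : ι → ℂ) : Matrix ι ι ℂ :=
  Matrix.vecMulVec x (star y)

/-- A family of vectors is orthonormal. -/
def ONFam {ι κ : Type*} [Fintype ι] [DecidableEq κ] (v : κ → ι → ℂ) : Prop :=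
  ∀ i j, star (v i) ⬝ᵥ v j = if i = j then 1 else 0

/-- A density matrix: positive semidefinite with unit trace. -/
def IsDensity {ι : Type*} [Fintype ι] (ρ : Matrix ι ι ℂ) : Prop :=
  ρ.PosSemidef ∧ ρ.trace = 1

/-- The matrix element `⟨x|M|y⟩`. -/
def matElem {ι : Type*} [Fintype ι] (M : Matrix ι ι ℂ) (x y : ι → ℂ) : ℂ :=
  star x ⬝ᵥ (M *ᵥ y)

/-- The Hamiltonian `H_S = ∑ₖ εₖ |εₖ⟩⟨εₖ|`. -/
def ham {n : ℕ} (ε : Fin n → ℝ) (v : Fin n → Fin n → ℂ) : Matrix (Fin n) (Fin n) ℂ :=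
  ∑ k, (ε k : ℂ) • ketbra (v k) (v k)

/-- `e^{t H_S} = ∑ₖ e^{t εₖ} |εₖ⟩⟨εₖ|` (functional calculus in the eigenbasis of `H_S`). -/
def expHam {n : ℕ} (ε : Fin n → ℝ) (v : Fin n → Fin n → ℂ) (t : ℝ) :
    Matrix (Fin n) (Fin n) ℂ :=
  ∑ k, (Real.exp (t * ε k) : ℂ) • ketbra (v k) (v k)

/-- The expected utility `⟨u(w)⟩_{ρ,U}` for quasiprobability parameter `q`,
with respect to the eigenvalues `ε` and orthonormal eigenvectors `v` of `H_S`. -/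
def expUtil {n : ℕ} (u : ℝ → ℝ) (q : ℝ) (ε : Fin n → ℝ) (v : Fin n → Fin n → ℂ)
    (ρ U : Matrix (Fin n) (Fin n) ℂ) : ℝ :=
  ∑ i, ∑ j, ∑ k,
    (matElem ρ (v i) (v j) * matElem Uᴴ (v j) (v k) * matElem U (v k) (v i)).re *
      u (q * ε i + (1 - q) * ε j - ε k)

/-- The optimal expected utility `𝓤(ρ) = max over unitaries U of ⟨u(w)⟩_{ρ,U}`. -/
def optUtil {n : ℕ} (u : ℝ → ℝ) (q : ℝ) (ε : Fin n → ℝ) (v : Fin n → Fin n → ℂ)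
    (ρ : Matrix (Fin n) (Fin n) ℂ) : ℝ :=
  ⨆ U : Matrix.unitaryGroup (Fin n) ℂ, expUtil u q ε v ρ (U : Matrix (Fin n) (Fin n) ℂ)

/-- The exponential utility `u(w) = (1 - e^{-r w})/r`. -/
def expUtility (r : ℝ) : ℝ → ℝ := fun w => (1 - Real.exp (-r * w)) / r

/-- The partial trace over the ancilla. -/
def ptraceA {dS dA : ℕ} (ρSA : Matrix (Fin dS × Fin dA) (Fin dS × Fin dA) ℂ) :
    Matrix (Fin dS) (Fin dS) ℂ :=
  Matrix.of fun i j => ∑ a, ρSA (i, a) (j, a)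

/-- The unnormalized conditional state `Tr_A((I ⊗ Π_a) ρ_SA (I ⊗ Π_a))`, where
`Π_a = |a⟩⟨a|` projects onto the vector `w a` of an orthonormal basis `w` of the ancilla. -/
def condUnnorm {dS dA : ℕ} (w : Fin dA → Fin dA → ℂ)
    (ρSA : Matrix (Fin dS × Fin dA) (Fin dS × Fin dA) ℂ) (a : Fin dA) :
    Matrix (Fin dS) (Fin dS) ℂ :=
  Matrix.of fun i j => ∑ c, ∑ d, ρSA (i, c) (j, d) * (w a d * star (w a c))

/-- The outcome probability `p_a = Tr((I ⊗ Π_a) ρ_SA)`. -/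
def prob {dS dA : ℕ} (w : Fin dA → Fin dA → ℂ)
    (ρSA : Matrix (Fin dS × Fin dA) (Fin dS × Fin dA) ℂ) (a : Fin dA) : ℝ :=
  ((condUnnorm w ρSA a).trace).re

/-- The conditional state `ρ_{S|a}`. -/
def condState {dS dA : ℕ} (w : Fin dA → Fin dA → ℂ)
    (ρSA : Matrix (Fin dS × Fin dA) (Fin dS × Fin dA) ℂ) (a : Fin dA) :
    Matrix (Fin dS) (Fin dS) ℂ :=
  ((prob w ρSA a : ℂ))⁻¹ • condUnnorm w ρSA a

/-- The daemonic expected utility `𝓤_{{Π_a}}(ρ_SA) = ∑_a p_a 𝓤(ρ_{S|a})`. -/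
def daemonicUtil {dS dA : ℕ} (u : ℝ → ℝ) (q : ℝ) (ε : Fin dS → ℝ)
    (v : Fin dS → Fin dS → ℂ) (w : Fin dA → Fin dA → ℂ)
    (ρSA : Matrix (Fin dS × Fin dA) (Fin dS × Fin dA) ℂ) : ℝ :=
  ∑ a, prob w ρSA a * optUtil u q ε v (condState w ρSA a)

/-- The maximum daemonic gain `δ𝓤(ρ_SA)`, maximizing over all orthonormal bases of the
ancilla (equivalently, over the rows of all unitary matrices). -/
def daemonicGain {dS dA : ℕ} (u : ℝ → ℝ) (q : ℝ) (ε : Fin dS → ℝ)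
    (v : Fin dS → Fin dS → ℂ)
    (ρSA : Matrix (Fin dS × Fin dA) (Fin dS × Fin dA) ℂ) : ℝ :=
  (⨆ V : Matrix.unitaryGroup (Fin dA) ℂ,
      daemonicUtil u q ε v (fun a => (V : Matrix (Fin dA) (Fin dA) ℂ) a) ρSA) -
    optUtil u q ε v (ptraceA ρSA)

/-- The ergotropy of a (possibly unnormalized) state `σ` with respect to a Hamiltonian `H`:
`ℰ_H(σ) = max over unitaries U of (Tr(Hσ) - Tr(H U σ U†))`. -/
def ergotropyH {n : ℕ} (H σ : Matrix (Fin n) (Fin n) ℂ) : ℝ :=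
  ⨆ U : Matrix.unitaryGroup (Fin n) ℂ,
    ((H * σ).trace -
      (H * ((U : Matrix (Fin n) (Fin n) ℂ) * σ * (U : Matrix (Fin n) (Fin n) ℂ)ᴴ)).trace).re

/-- A separable bipartite state: a convex combination of product states. -/
def IsSeparable {dS dA : ℕ} (ρSA : Matrix (Fin dS × Fin dA) (Fin dS × Fin dA) ℂ) : Prop :=
  ∃ (m : ℕ) (p : Fin m → ℝ) (σ : Fin m → Matrix (Fin dS) (Fin dS) ℂ)
    (τ : Fin m → Matrix (Fin dA) (Fin dA) ℂ),
    (∀ k, 0 ≤ p k) ∧ (∑ k, p k = 1) ∧ (∀ k, IsDensity (σ k)) ∧ (∀ k, IsDensity (τ k)) ∧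
    ρSA = ∑ k, (p k : ℂ) • (σ k ⊗ₖ τ k)

/-- A classical-quantum state `ρ_SA = ∑ₖ pₖ Pₖ ⊗ ρᴬₖ` with `Pₖ` mutually orthogonal
rank-one projectors summing to the identity. -/
def IsClassicalQuantum {dS dA : ℕ}
    (ρSA : Matrix (Fin dS × Fin dA) (Fin dS × Fin dA) ℂ) : Prop :=
  ∃ (p : Fin dS → ℝ) (ψ : Fin dS → Fin dS → ℂ) (τ : Fin dS → Matrix (Fin dA) (Fin dA) ℂ),
    (∀ k, 0 ≤ p k) ∧ (∑ k, p k = 1) ∧ ONFam ψ ∧ (∀ k, IsDensity (τ k)) ∧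
    ρSA = ∑ k, (p k : ℂ) • (ketbra (ψ k) (ψ k) ⊗ₖ τ k)

/-- The dephasing map associated with an orthonormal basis `v`. -/
def dephase {n : ℕ} (v : Fin n → Fin n → ℂ) (ρ : Matrix (Fin n) (Fin n) ℂ) :
    Matrix (Fin n) (Fin n) ℂ :=
  ∑ k, ketbra (v k) (v k) * ρ * ketbra (v k) (v k)

section MatElem

variable {ι : Type*} [Fintype ι]

lemma matElem_add (A B : Matrix ι ι ℂ) (x y : ι → ℂ) :
    matElem (A + B) x y = matElem A x y + matElem B x y := by
  simp [matElem, add_mulVec, dotProduct_add]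

lemma matElem_smul (c : ℂ) (A : Matrix ι ι ℂ) (x y : ι → ℂ) :
    matElem (c • A) x y = c * matElem A x y := by
  simp [matElem, smul_mulVec, dotProduct_smul]

lemma matElem_one [DecidableEq ι] (x y : ι → ℂ) :
    matElem (1 : Matrix ι ι ℂ) x y = star x ⬝ᵥ y := by
  simp [matElem]

lemma matElem_ketbra (x y p q : ι → ℂ) :
    matElem (ketbra x y) p q = (star p ⬝ᵥ x) * (star y ⬝ᵥ q) := by
  simp only [matElem, ketbra, vecMulVec_mulVec, dotProduct_smul, op_smul_eq_mul, mul_comm]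

lemma matElem_conjTranspose (A : Matrix ι ι ℂ) (x y : ι → ℂ) :
    matElem Aᴴ x y = star (matElem A y x) := by
  simp only [matElem, mulVec, dotProduct, conjTranspose_apply, Pi.star_apply, star_sum,
    star_mul', star_star, Finset.mul_sum]
  rw [Finset.sum_comm]
  exact Finset.sum_congr rfl fun _ _ => Finset.sum_congr rfl fun _ _ => by ring

lemma matElem_ketbra_self (ψ x : ι → ℂ) :
    matElem (ketbra ψ ψ) x x = (Complex.normSq (star x ⬝ᵥ ψ) : ℂ) := by
  rw [matElem_ketbra, star_dotProduct ψ x, Complex.star_def, Complex.mul_conj]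

end MatElem

section Unitary

variable {n : Type*} [Fintype n] [DecidableEq n] {U : Matrix n n ℂ}

lemma sum_normSq_row_of_mem_unitaryGroup (hU : U ∈ unitaryGroup n ℂ) (i : n) :
    ∑ k, Complex.normSq (U i k) = 1 := by
  have h := congrFun (congrFun (mem_unitaryGroup_iff.mp hU) i) i
  simp only [mul_apply, star_apply, Complex.star_def, Complex.mul_conj, one_apply_eq] at h
  exact_mod_cast h

lemma sum_normSq_col_of_mem_unitaryGroup (hU : U ∈ unitaryGroup n ℂ) (j : n) :
    ∑ k, Complex.normSq (U k j) = 1 := by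
  have h := congrFun (congrFun (mem_unitaryGroup_iff'.mp hU) j) j
  simp only [mul_apply, star_apply, Complex.star_def, ← Complex.normSq_eq_conj_mul_self,
    one_apply_eq] at h
  exact_mod_cast h

end Unitary

lemma onFam_comp_equiv {ι κ : Type*} [Fintype ι] [DecidableEq κ] {v : κ → ι → ℂ}
    (hv : ONFam v) (e : κ ≃ κ) : ONFam (v ∘ e) := fun i j => by
  simp [hv (e i) (e j), e.injective.eq_iff]

section Basis

variable {n : Type*} [Fintype n] {v : n → n → ℂ}

def coordMatrix (v : n → n → ℂ) : Matrix n n ℂ := (Matrix.of v).map star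

lemma matElem_eq_coordMatrix (M : Matrix n n ℂ) (k i : n) :
    matElem M (v k) (v i) = (coordMatrix v * M * (coordMatrix v)ᴴ) k i := by
  simp only [matElem, coordMatrix, mul_apply, dotProduct, mulVec, conjTranspose_apply, map_apply,
    of_apply, Pi.star_apply, star_star, Finset.mul_sum, Finset.sum_mul]
  rw [Finset.sum_comm]
  exact Finset.sum_congr rfl fun _ _ => Finset.sum_congr rfl fun _ _ => by ring

variable [DecidableEq n]

lemma onFam_iff_mem_unitaryGroup : ONFam v ↔ Matrix.of v ∈ unitaryGroup n ℂ := by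
  rw [mem_unitaryGroup_iff, ← Matrix.ext_iff, ONFam]
  refine forall_comm.trans (forall_congr' fun i => forall_congr' fun j => ?_)
  simp [mul_apply, dotProduct, one_apply, mul_comm, eq_comm]

lemma coordMatrix_mem_unitaryGroup (hv : ONFam v) : coordMatrix v ∈ unitaryGroup n ℂ :=
  map_star_mem_unitaryGroup_iff.mpr (onFam_iff_mem_unitaryGroup.mp hv)

lemma conjTranspose_coordMatrix_mem_unitaryGroup (hv : ONFam v) :
    (coordMatrix v)ᴴ ∈ unitaryGroup n ℂ := by
  simpa [star_eq_conjTranspose] using Unitary.star_mem (coordMatrix_mem_unitaryGroup hv)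

lemma conj_coordMatrix_mem_unitaryGroup (hv : ONFam v) {U : Matrix n n ℂ}
    (hU : U ∈ unitaryGroup n ℂ) :
    coordMatrix v * U * (coordMatrix v)ᴴ ∈ unitaryGroup n ℂ :=
  mul_mem (mul_mem (coordMatrix_mem_unitaryGroup hv) hU)
    (conjTranspose_coordMatrix_mem_unitaryGroup hv)

lemma trace_eq_sum_matElem (hv : ONFam v) (M : Matrix n n ℂ) :
    M.trace = ∑ k, matElem M (v k) (v k) := by
  have h := mem_unitaryGroup_iff'.mp (coordMatrix_mem_unitaryGroup hv)
  calc M.trace = (coordMatrix v * M * (coordMatrix v)ᴴ).trace := by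
        rw [trace_mul_cycle, ← star_eq_conjTranspose, h, one_mul]
    _ = ∑ k, matElem M (v k) (v k) := by simp only [trace, Matrix.diag, matElem_eq_coordMatrix]

lemma overlap_mem_unitaryGroup {w b : n → n → ℂ} (hw : ONFam w) (hb : ONFam b) :
    Matrix.of (fun a k => star (w a) ⬝ᵥ b k) ∈ unitaryGroup n ℂ := by
  have h : Matrix.of (fun a k => star (w a) ⬝ᵥ b k) = coordMatrix w * (coordMatrix b)ᴴ := by
    ext a k
    simp [coordMatrix, mul_apply, dotProduct]
  rw [h]
  exact mul_mem (coordMatrix_mem_unitaryGroup hw) (conjTranspose_coordMatrix_mem_unitaryGroup hb)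

lemma normSq_overlap_le_one {w b : n → n → ℂ} (hw : ONFam w) (hb : ONFam b) (a k : n) :
    Complex.normSq (star (w a) ⬝ᵥ b k) ≤ 1 := by
  rw [Complex.normSq_eq_norm_sq]
  exact pow_le_one₀ (norm_nonneg _)
    (entry_norm_bound_of_unitary (overlap_mem_unitaryGroup hw hb) a k)

lemma normSq_matElem_le_one (hv : ONFam v) {U : Matrix n n ℂ} (hU : U ∈ unitaryGroup n ℂ)
    (k i : n) : Complex.normSq (matElem U (v k) (v i)) ≤ 1 := by
  rw [matElem_eq_coordMatrix, Complex.normSq_eq_norm_sq]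
  exact pow_le_one₀ (norm_nonneg _)
    (entry_norm_bound_of_unitary (conj_coordMatrix_mem_unitaryGroup hv hU) k i)

end Basis

section Qubit

variable {u : ℝ → ℝ} {ε : Fin 2 → ℝ} {v : Fin 2 → Fin 2 → ℂ}

lemma expUtil_half_eq (hu0 : u 0 = 0) (hZ : u ((ε 1 - ε 0) / 2) = u (-((ε 1 - ε 0) / 2)))
    (hv : ONFam v) (ρ : Matrix (Fin 2) (Fin 2) ℂ) {U : Matrix (Fin 2) (Fin 2) ℂ}
    (hU : U ∈ unitaryGroup (Fin 2) ℂ) :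
    expUtil u (1/2) ε v ρ U = Complex.normSq (matElem U (v 1) (v 0)) *
      ((matElem ρ (v 1) (v 1)).re * u (ε 1 - ε 0) +
        (matElem ρ (v 0) (v 0)).re * u (ε 0 - ε 1)) := by
  set W := coordMatrix v * U * (coordMatrix v)ᴴ
  have hW : W ∈ unitaryGroup (Fin 2) ℂ := conj_coordMatrix_mem_unitaryGroup hv hU
  have hUW : ∀ k i, matElem U (v k) (v i) = W k i := matElem_eq_coordMatrix U
  have hUHW : ∀ j k, matElem Uᴴ (v j) (v k) = star (W k j) := fun j k => by
    rw [matElem_conjTranspose, hUW]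
  have hWW := mem_unitaryGroup_iff'.mp hW
  have horth (i j : Fin 2) (hij : i ≠ j) (c : ℂ) :
      (c * star (W 0 i) * W 0 j).re + (c * star (W 1 i) * W 1 j).re = 0 := by
    have h := congrFun (congrFun hWW i) j
    simp only [mul_apply, star_apply, Fin.sum_univ_two, one_apply_ne hij] at h
    rw [← Complex.add_re, mul_assoc, mul_assoc, ← mul_add, h, mul_zero, Complex.zero_re]
  have hnormSq (c w : ℂ) : (c * star w * w).re = Complex.normSq w * c.re := by
    rw [mul_assoc, Complex.star_def, ← Complex.normSq_eq_conj_mul_self, Complex.re_mul_ofReal,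
      mul_comm]
  have hsym : Complex.normSq (W 0 1) = Complex.normSq (W 1 0) := by
    have hr := sum_normSq_row_of_mem_unitaryGroup hW 0
    have hc := sum_normSq_col_of_mem_unitaryGroup hW 0
    simp only [Fin.sum_univ_two] at hr hc
    linarith
  simp only [expUtil, Fin.sum_univ_two, hUW, hUHW, hnormSq, ← hsym]
  -- the coherent terms have weight `u (±(ε 1 - ε 0) / 2)`, equal by `hZ`, and cancel by `horth`
  linear_combination (norm := ring_nf)
    u ((ε 1 - ε 0) / 2) * (horth 1 0 one_ne_zero (matElem ρ (v 0) (v 1)) +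
      horth 0 1 zero_ne_one (matElem ρ (v 1) (v 0))) -
    ((matElem ρ (v 0) (v 1) * star (W 1 1) * W 1 0).re +
      (matElem ρ (v 1) (v 0) * star (W 1 0) * W 1 1).re) * hZ +
    (Complex.normSq (W 0 0) * (matElem ρ (v 0) (v 0)).re +
      Complex.normSq (W 1 1) * (matElem ρ (v 1) (v 1)).re) * hu0

lemma exists_mem_unitaryGroup_matElem_eq_one (hv : ONFam v) :
    ∃ U ∈ unitaryGroup (Fin 2) ℂ, matElem U (v 1) (v 0) = 1 := by
  have hσ : !![0, 1; 1, 0] ∈ unitaryGroup (Fin 2) ℂ := by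
    rw [mem_unitaryGroup_iff]
    ext i j
    fin_cases i <;> fin_cases j <;> simp [mul_apply]
  have hBB : coordMatrix v * (coordMatrix v)ᴴ = 1 := by
    simpa [star_eq_conjTranspose] using mem_unitaryGroup_iff.mp (coordMatrix_mem_unitaryGroup hv)
  refine ⟨(coordMatrix v)ᴴ * !![0, 1; 1, 0] * coordMatrix v,
    mul_mem (mul_mem (conjTranspose_coordMatrix_mem_unitaryGroup hv) hσ)
      (coordMatrix_mem_unitaryGroup hv), ?_⟩
  rw [matElem_eq_coordMatrix, ← Matrix.mul_assoc, ← Matrix.mul_assoc, hBB, Matrix.one_mul,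
    Matrix.mul_assoc, hBB, Matrix.mul_one]
  simp

lemma optUtil_half_eq (hu0 : u 0 = 0) (hZ : u ((ε 1 - ε 0) / 2) = u (-((ε 1 - ε 0) / 2)))
    (hv : ONFam v) (ρ : Matrix (Fin 2) (Fin 2) ℂ) :
    optUtil u (1/2) ε v ρ =
      max ((matElem ρ (v 1) (v 1)).re * u (ε 1 - ε 0) +
        (matElem ρ (v 0) (v 0)).re * u (ε 0 - ε 1)) 0 := by
  set K := (matElem ρ (v 1) (v 1)).re * u (ε 1 - ε 0) +
    (matElem ρ (v 0) (v 0)).re * u (ε 0 - ε 1)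
  have hle (U : unitaryGroup (Fin 2) ℂ) : expUtil u (1/2) ε v ρ U ≤ max K 0 := by
    have h0 := Complex.normSq_nonneg (matElem (U : Matrix (Fin 2) (Fin 2) ℂ) (v 1) (v 0))
    have h1 := normSq_matElem_le_one hv U.2 1 0
    rw [expUtil_half_eq hu0 hZ hv ρ U.2]
    rcases le_total 0 K with hK | hK
    · nlinarith [le_max_left K 0]
    · nlinarith [le_max_right K 0]
  have hbdd : BddAbove (Set.range fun U : unitaryGroup (Fin 2) ℂ => expUtil u (1/2) ε v ρ U) :=
    ⟨max K 0, Set.forall_mem_range.mpr hle⟩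
  refine le_antisymm (ciSup_le hle) (max_le ?_ ?_)
  · obtain ⟨U, hU, hU10⟩ := exists_mem_unitaryGroup_matElem_eq_one hv
    refine le_trans (le_of_eq ?_) (le_ciSup hbdd ⟨U, hU⟩)
    rw [expUtil_half_eq hu0 hZ hv ρ hU, hU10, Complex.normSq_one, one_mul]
  · refine le_trans (le_of_eq ?_) (le_ciSup hbdd 1)
    rw [OneMemClass.coe_one, expUtil_half_eq hu0 hZ hv ρ (one_mem _), matElem_one, hv 1 0]
    simp

end Qubit

section Ancilla

variable {dS dA : ℕ}

def tensorVec {m n : Type*} (x : m → ℂ) (y : n → ℂ) : m × n → ℂ :=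
  fun p => x p.1 * y p.2

lemma star_tensorVec_dotProduct {m n : Type*} [Fintype m] [Fintype n] (x x' : m → ℂ)
    (y y' : n → ℂ) :
    star (tensorVec x y) ⬝ᵥ tensorVec x' y' = (star x ⬝ᵥ x') * (star y ⬝ᵥ y') := by
  simp only [tensorVec, dotProduct, Pi.star_apply, star_mul', Fintype.sum_prod_type,
    Finset.sum_mul_sum]
  exact Finset.sum_congr rfl fun _ _ => Finset.sum_congr rfl fun _ _ => by ring

lemma matElem_condUnnorm (w : Fin dA → Fin dA → ℂ)
    (ρSA : Matrix (Fin dS × Fin dA) (Fin dS × Fin dA) ℂ) (a : Fin dA) (x y : Fin dS → ℂ) :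
    matElem (condUnnorm w ρSA a) x y = matElem ρSA (tensorVec x (w a)) (tensorVec y (w a)) := by
  simp only [matElem, condUnnorm, tensorVec, dotProduct, mulVec, of_apply, Pi.star_apply,
    star_mul', Fintype.sum_prod_type, Finset.mul_sum, Finset.sum_mul]
  refine Finset.sum_congr rfl fun _ _ => ?_
  rw [Finset.sum_comm]
  exact Finset.sum_congr rfl fun _ _ => Finset.sum_congr rfl fun _ _ =>
    Finset.sum_congr rfl fun _ _ => by ring

lemma ptraceA_eq_sum_condUnnorm {w : Fin dA → Fin dA → ℂ} (hw : ONFam w)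
    (ρSA : Matrix (Fin dS × Fin dA) (Fin dS × Fin dA) ℂ) :
    ptraceA ρSA = ∑ a, condUnnorm w ρSA a := by
  have hcompl := mem_unitaryGroup_iff'.mp (coordMatrix_mem_unitaryGroup hw)
  have hδ (c d : Fin dA) : ∑ a, w a d * star (w a c) = if c = d then 1 else 0 := by
    simpa [coordMatrix, mul_apply, one_apply, eq_comm] using congrFun (congrFun hcompl d) c
  ext i j
  simp only [ptraceA, condUnnorm, of_apply, Matrix.sum_apply]
  rw [Finset.sum_comm]
  refine Finset.sum_congr rfl fun c _ => ?_
  rw [Finset.sum_comm]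
  simp only [← Finset.mul_sum, hδ, mul_ite, mul_one, mul_zero, Finset.sum_ite_eq,
    Finset.mem_univ, if_true]

end Ancilla

section Werner

def bellVec (v b : Fin 2 → Fin 2 → ℂ) : Fin 2 × Fin 2 → ℂ :=
  fun x => (v 0 x.1 * b 0 x.2 + v 1 x.1 * b 1 x.2) / (Real.sqrt 2 : ℂ)

def wernerState (v b : Fin 2 → Fin 2 → ℂ) (z : ℝ) :
    Matrix (Fin 2 × Fin 2) (Fin 2 × Fin 2) ℂ :=
  (((1 - z) / 4 : ℝ) : ℂ) • 1 + (z : ℂ) • ketbra (bellVec v b) (bellVec v b)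

variable {v b w : Fin 2 → Fin 2 → ℂ} {z : ℝ}

lemma star_tensorVec_dotProduct_bellVec (hv : ONFam v) (m : Fin 2) (y : Fin 2 → ℂ) :
    star (tensorVec (v m) y) ⬝ᵥ bellVec v b = (star y ⬝ᵥ b m) / (Real.sqrt 2 : ℂ) := by
  have h : bellVec v b =
      (Real.sqrt 2 : ℂ)⁻¹ • (tensorVec (v 0) (b 0) + tensorVec (v 1) (b 1)) := by
    ext x
    simp [bellVec, tensorVec, div_eq_inv_mul]
  rw [h, dotProduct_smul, dotProduct_add, star_tensorVec_dotProduct, star_tensorVec_dotProduct,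
    hv m 0, hv m 1]
  fin_cases m <;> simp [div_eq_inv_mul]

lemma matElem_wernerState_tensorVec (hv : ONFam v) (hw : ONFam w) (m a : Fin 2) :
    matElem (wernerState v b z) (tensorVec (v m) (w a)) (tensorVec (v m) (w a)) =
      (((1 - z) / 4 + z / 2 * Complex.normSq (star (w a) ⬝ᵥ b m) : ℝ) : ℂ) := by
  have h2 : Complex.normSq (Real.sqrt 2 : ℂ) = 2 := by
    rw [Complex.normSq_ofReal, Real.mul_self_sqrt zero_le_two]
  simp only [wernerState, matElem_add, matElem_smul, matElem_one, matElem_ketbra_self,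
    star_tensorVec_dotProduct, star_tensorVec_dotProduct_bellVec hv, Complex.normSq_div, h2, hv m m,
    hw a a, if_true]
  push_cast
  ring

lemma matElem_condUnnorm_wernerState (hv : ONFam v) (hw : ONFam w) (a m : Fin 2) :
    matElem (condUnnorm w (wernerState v b z) a) (v m) (v m) =
      (((1 - z) / 4 + z / 2 * Complex.normSq (star (w a) ⬝ᵥ b m) : ℝ) : ℂ) := by
  rw [matElem_condUnnorm, matElem_wernerState_tensorVec hv hw]

lemma prob_wernerState (hv : ONFam v) (hb : ONFam b) (hw : ONFam w) (a : Fin 2) :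
    prob w (wernerState v b z) a = 1 / 2 := by
  have hrow := sum_normSq_row_of_mem_unitaryGroup (overlap_mem_unitaryGroup hw hb) a
  simp only [of_apply, Fin.sum_univ_two] at hrow
  simp only [prob, trace_eq_sum_matElem hv, matElem_condUnnorm_wernerState hv hw,
    Fin.sum_univ_two, ← Complex.ofReal_add, Complex.ofReal_re]
  linear_combination z / 2 * hrow

lemma re_matElem_condState_wernerState (hv : ONFam v) (hb : ONFam b) (hw : ONFam w)
    (a m : Fin 2) :
    (matElem (condState w (wernerState v b z) a) (v m) (v m)).re =
      (1 - z) / 2 + z * Complex.normSq (star (w a) ⬝ᵥ b m) := by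
  rw [condState, matElem_smul, prob_wernerState hv hb hw, matElem_condUnnorm_wernerState hv hw]
  norm_num
  ring

variable {u : ℝ → ℝ} {ε : Fin 2 → ℝ} {X Y : ℝ}

lemma optUtil_condState_wernerState (hu0 : u 0 = 0)
    (hZ : u ((ε 1 - ε 0) / 2) = u (-((ε 1 - ε 0) / 2))) (hv : ONFam v) (hb : ONFam b)
    (hw : ONFam w) (hX : u (ε 1 - ε 0) = X) (hY : u (ε 0 - ε 1) = X - Y) (a : Fin 2) :
    optUtil u (1/2) ε v (condState w (wernerState v b z) a) =
      max (X - ((1 - z) / 2 + z * Complex.normSq (star (w a) ⬝ᵥ b 0)) * Y) 0 := by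
  have hrow := sum_normSq_row_of_mem_unitaryGroup (overlap_mem_unitaryGroup hw hb) a
  simp only [of_apply, Fin.sum_univ_two] at hrow
  rw [optUtil_half_eq hu0 hZ hv, re_matElem_condState_wernerState hv hb hw,
    re_matElem_condState_wernerState hv hb hw, hX, hY]
  congr 1
  linear_combination z * X * hrow

lemma daemonicUtil_wernerState (hu0 : u 0 = 0)
    (hZ : u ((ε 1 - ε 0) / 2) = u (-((ε 1 - ε 0) / 2))) (hv : ONFam v) (hb : ONFam b)
    (hw : ONFam w) (hX : u (ε 1 - ε 0) = X) (hY : u (ε 0 - ε 1) = X - Y) :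
    daemonicUtil u (1/2) ε v w (wernerState v b z) =
      ∑ a, 1 / 2 *
        max (X - ((1 - z) / 2 + z * Complex.normSq (star (w a) ⬝ᵥ b 0)) * Y) 0 := by
  simp only [daemonicUtil, prob_wernerState hv hb hw,
    optUtil_condState_wernerState hu0 hZ hv hb hw hX hY]

lemma optUtil_ptraceA_wernerState (hu0 : u 0 = 0)
    (hZ : u ((ε 1 - ε 0) / 2) = u (-((ε 1 - ε 0) / 2))) (hv : ONFam v) (hb : ONFam b)
    (hX : u (ε 1 - ε 0) = X) (hY : u (ε 0 - ε 1) = X - Y) :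
    optUtil u (1/2) ε v (ptraceA (wernerState v b z)) = max (X - Y / 2) 0 := by
  rw [optUtil_half_eq hu0 hZ hv, ptraceA_eq_sum_condUnnorm hb]
  simp only [Fin.sum_univ_two, matElem_add, matElem_condUnnorm_wernerState hv hb, hb _ _, hX, hY]
  norm_num
  ring_nf

lemma daemonicUtil_wernerState_swap (hu0 : u 0 = 0)
    (hZ : u ((ε 1 - ε 0) / 2) = u (-((ε 1 - ε 0) / 2))) (hv : ONFam v) (hb : ONFam b)
    (hX : u (ε 1 - ε 0) = X) (hY : u (ε 0 - ε 1) = X - Y) :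
    daemonicUtil u (1/2) ε v (b ∘ Equiv.swap 0 1) (wernerState v b z) =
      1 / 2 * max (X - (1 - z) / 2 * Y) 0 + 1 / 2 * max (X - (1 + z) / 2 * Y) 0 := by
  rw [daemonicUtil_wernerState hu0 hZ hv hb (onFam_comp_equiv hb _) hX hY]
  simp only [Fin.sum_univ_two, Function.comp_apply, Equiv.swap_apply_left,
    Equiv.swap_apply_right, hb 1 0, hb 0 0]
  norm_num
  ring_nf

lemma sum_half_max_eq (hY : 0 ≤ Y) (hz : 0 ≤ z) (hXYz : (1 + z) * Y ≤ 2 * X)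
    {s : Fin 2 → ℝ} (hs : ∀ a, s a ≤ 1) (hsum : ∑ a, s a = 1) :
    ∑ a, 1 / 2 * max (X - ((1 - z) / 2 + z * s a) * Y) 0 = X - Y / 2 := by
  have hpos (a : Fin 2) : 0 ≤ X - ((1 - z) / 2 + z * s a) * Y := by
    nlinarith [mul_nonneg (mul_nonneg hz (sub_nonneg.2 (hs a))) hY]
  simp only [max_eq_left (hpos _)]
  rw [Fin.sum_univ_two] at hsum ⊢
  linear_combination -(z * Y / 2) * hsum

lemma sum_half_max_le (hY : 0 ≤ Y) (hz : z ∈ Set.Icc (0 : ℝ) 1) {s : Fin 2 → ℝ}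
    (hs : ∀ a, 0 ≤ s a) :
    ∑ a, 1 / 2 * max (X - ((1 - z) / 2 + z * s a) * Y) 0 ≤ max X 0 := by
  have hle (a : Fin 2) : max (X - ((1 - z) / 2 + z * s a) * Y) 0 ≤ max X 0 := by
    refine max_le_max_right 0 (sub_le_self X (mul_nonneg ?_ hY))
    nlinarith [hz.1, hz.2, hs a]
  rw [Fin.sum_univ_two]
  linarith [hle 0, hle 1]

end Werner

theorem stmt14_general (u : ℝ → ℝ) (hu0 : u 0 = 0)
    (ε : Fin 2 → ℝ)
    (v : Fin 2 → Fin 2 → ℂ) (hv : ONFam v)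
    (b : Fin 2 → Fin 2 → ℂ) (hb : ONFam b)
    (hZ : u ((ε 1 - ε 0)/2) - u (-((ε 1 - ε 0)/2)) = 0)
    (X Y : ℝ) (hX : X = u (ε 1 - ε 0)) (hY : Y = u (ε 1 - ε 0) - u (-(ε 1 - ε 0)))
    (hY0 : 0 < Y) (hXY : Y < 2 * X)
    (z : ℝ) (hz : z ∈ Set.Icc (0:ℝ) 1)
    (ψ : Fin 2 × Fin 2 → ℂ)
    (hψ : ψ = fun x => (v 0 x.1 * b 0 x.2 + v 1 x.1 * b 1 x.2) / (Real.sqrt 2 : ℂ))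
    (ρSA : Matrix (Fin 2 × Fin 2) (Fin 2 × Fin 2) ℂ)
    (hρSA : ρSA = (((1 - z)/4 : ℝ) : ℂ) • (1 : Matrix (Fin 2 × Fin 2) (Fin 2 × Fin 2) ℂ) +
      (z : ℂ) • ketbra ψ ψ) :
    (z ≤ 2 * X / Y - 1 → daemonicGain u (1/2) ε v ρSA = 0) ∧
    (2 * X / Y - 1 < z → 0 < daemonicGain u (1/2) ε v ρSA) := by
  rw [show ρSA = wernerState v b z by rw [hρSA, hψ]; rfl]
  have hZ' := sub_eq_zero.mp hZ
  have hu1 : u (ε 1 - ε 0) = X := hX.symm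
  have hu2 : u (ε 0 - ε 1) = X - Y := by rw [hY, hX, ← neg_sub]; ring
  have hrows (V : unitaryGroup (Fin 2) ℂ) : ONFam fun a => (V : Matrix (Fin 2) (Fin 2) ℂ) a :=
    onFam_iff_mem_unitaryGroup.mpr V.2
  have hD (V : unitaryGroup (Fin 2) ℂ) :=
    daemonicUtil_wernerState hu0 hZ' hv hb (hrows V) hu1 hu2 (z := z)
  rw [daemonicGain, optUtil_ptraceA_wernerState hu0 hZ' hv hb hu1 hu2, max_eq_left (by linarith)]
  refine ⟨fun hle => ?_, fun hlt => ?_⟩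
  · have hXYz : (1 + z) * Y ≤ 2 * X := by
      rw [le_sub_iff_add_le, le_div_iff₀ hY0] at hle; linarith
    have hconst (V : unitaryGroup (Fin 2) ℂ) := (hD V).trans <| sum_half_max_eq hY0.le hz.1 hXYz
      (fun a => normSq_overlap_le_one (hrows V) hb a 0)
      (sum_normSq_col_of_mem_unitaryGroup (overlap_mem_unitaryGroup (hrows V) hb) 0)
    rw [iSup_congr hconst, ciSup_const, sub_self]
  · have hXYz : 2 * X < (1 + z) * Y := by
      rw [sub_lt_iff_lt_add, div_lt_iff₀ hY0] at hlt; linarith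
    have hbdd : BddAbove (Set.range fun V : unitaryGroup (Fin 2) ℂ =>
        daemonicUtil u (1/2) ε v (fun a => (V : Matrix (Fin 2) (Fin 2) ℂ) a)
          (wernerState v b z)) :=
      ⟨max X 0, Set.forall_mem_range.2 fun V =>
        (hD V).trans_le (sum_half_max_le hY0.le hz fun _ => Complex.normSq_nonneg _)⟩
    have hswap : daemonicUtil u (1/2) ε v (b ∘ Equiv.swap 0 1) (wernerState v b z) ≤ _ :=
      le_ciSup hbdd
        ⟨Matrix.of (b ∘ Equiv.swap 0 1), onFam_iff_mem_unitaryGroup.mp (onFam_comp_equiv hb _)⟩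
    rw [daemonicUtil_wernerState_swap hu0 hZ' hv hb hu1 hu2] at hswap
    linarith [le_max_left (X - (1 - z) / 2 * Y) 0, le_max_right (X - (1 + z) / 2 * Y) 0]

/-- for the Werner state `ρ_SA = ((1-z)/4) I₄ + z |ψ⟩⟨ψ|`,
`|ψ⟩ = (|ε₁⟩⊗|0⟩ + |ε₂⟩⊗|1⟩)/√2`, an incoherent utility (`Z = 0`) with `2X > Y > 0`:
`δ𝓤(ρ_SA) = 0` if `z ≤ z₀ = 2X/Y - 1`, and `δ𝓤(ρ_SA) > 0` if `z > z₀`. -/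
theorem stmt14 (u : ℝ → ℝ) (hu0 : u 0 = 0)
    (ε : Fin 2 → ℝ) (hε : ε 0 < ε 1)
    (v : Fin 2 → Fin 2 → ℂ) (hv : ONFam v)
    (b : Fin 2 → Fin 2 → ℂ) (hb : ONFam b)
    (hZ : u ((ε 1 - ε 0)/2) - u (-((ε 1 - ε 0)/2)) = 0)
    (X Y : ℝ) (hX : X = u (ε 1 - ε 0)) (hY : Y = u (ε 1 - ε 0) - u (-(ε 1 - ε 0)))
    (hY0 : 0 < Y) (hXY : Y < 2 * X)
    (z : ℝ) (hz : z ∈ Set.Icc (0:ℝ) 1)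
    (ψ : Fin 2 × Fin 2 → ℂ)
    (hψ : ψ = fun x => (v 0 x.1 * b 0 x.2 + v 1 x.1 * b 1 x.2) / (Real.sqrt 2 : ℂ))
    (ρSA : Matrix (Fin 2 × Fin 2) (Fin 2 × Fin 2) ℂ)
    (hρSA : ρSA = (((1 - z)/4 : ℝ) : ℂ) • (1 : Matrix (Fin 2 × Fin 2) (Fin 2 × Fin 2) ℂ) +
      (z : ℂ) • ketbra ψ ψ) :
    (z ≤ 2 * X / Y - 1 → daemonicGain u (1/2) ε v ρSA = 0) ∧
    (2 * X / Y - 1 < z → 0 < daemonicGain u (1/2) ε v ρSA) :=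
  stmt14_general u hu0 ε v hv b hb hZ X Y hX hY hY0 hXY z hz ψ hψ ρSA hρSA

end Daemonic
end
end

section
/- Fix the exponential utility u(w) = (1 − e^{−rw})/r with r ≠ 0 and an arbitrary quasiprobability parameter q ∈ ℝ. For any density matrix ρ on ℂ^{d_S}, the optimal expected utility equals 𝓤(ρ) = (1/r)(1 − Σ_k u_k e^{r ε_k}), where u_1 ≥ u_2 ≥ ... ≥ u_{d_S} are the eigenvalues, in decreasing order, of the Hermitian matrix ρ̃ = (1/2)(e^{−rq H_S} ρ e^{−r(1−q) H_S} + e^{−r(1−q) H_S} ρ e^{−rq H_S}). -/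
/-!
The exponential utility factorises,
`u(qεᵢ + (1-q)εⱼ - εₖ) = (1 - e^{-rqεᵢ} e^{-r(1-q)εⱼ} e^{rεₖ}) / r`,
so the expected utility is `(1/r)(1 - Re Tr(e^{-rqH} ρ e^{-r(1-q)H} U† e^{rH} U))`.
As `U† e^{rH} U` is Hermitian, the real part only sees the Hermitian part `ρ̃` of
`e^{-rqH} ρ e^{-r(1-q)H}`, and expanding `ρ̃ = ∑ₗ uₗ |φₗ⟩⟨φₗ|` gives
`(1/r)(1 - ∑ₖₗ e^{rεₖ} |⟨εₖ|U|φₗ⟩|² uₗ)`. The weights `|⟨εₖ|U|φₗ⟩|²` form a doubly stochastic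
matrix, so by Birkhoff's theorem and the rearrangement inequality the optimum is attained at a
permutation. Both `k ↦ -e^{rεₖ}/r` (for either sign of `r`) and `k ↦ uₖ` are decreasing, so the
identity pairing, i.e. `U = ∑ₖ |εₖ⟩⟨φₖ|`, is optimal.
-/

open Matrix BigOperators Finset Kronecker
open scoped ComplexOrder

noncomputable section

namespace Daemonic

section Rearrangement

variable {ι : Type*} [Fintype ι] [DecidableEq ι]

theorem dotProduct_mulVec_le_of_monovary {a u : ι → ℝ} (h : Monovary a u)
    {B : Matrix ι ι ℝ} (hB : B ∈ doublyStochastic ℝ ι) : a ⬝ᵥ (B *ᵥ u) ≤ a ⬝ᵥ u := by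
  have hlin : IsLinearMap ℝ fun M : Matrix ι ι ℝ => a ⬝ᵥ (M *ᵥ u) :=
    ⟨fun M N => by simp [add_mulVec], fun c M => by simp [smul_mulVec]⟩
  rw [← SetLike.mem_coe, doublyStochastic_eq_convexHull_permMatrix] at hB
  refine convexHull_min ?_ (convex_halfSpace_le hlin _) hB
  rintro _ ⟨σ, rfl⟩
  simpa [permMatrix_mulVec, dotProduct] using h.sum_mul_comp_perm_le_sum_mul (σ := σ)

theorem map_normSq_mem_doublyStochastic {Y : Matrix ι ι ℂ} (hY : Y ∈ unitaryGroup ι ℂ) :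
    Y.map Complex.normSq ∈ doublyStochastic ℝ ι := by
  refine mem_doublyStochastic_iff_sum.mpr ⟨fun _ _ => Complex.normSq_nonneg _, fun i => ?_,
    fun j => ?_⟩
  · have := congr_fun₂ (mem_unitaryGroup_iff.mp hY) i i
    apply Complex.ofReal_injective
    simpa [mul_apply, Complex.mul_conj] using this
  · have := congr_fun₂ (mem_unitaryGroup_iff'.mp hY) j j
    apply Complex.ofReal_injective
    simpa [mul_apply, Complex.normSq_eq_conj_mul_self] using this

end Rearrangement

section Coordinates

variable {ι κ : Type*} [Fintype ι]

def colMatrix (v : κ → ι → ℂ) : Matrix ι κ ℂ := (Matrix.of v)ᵀ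

theorem matElem_eq_colMatrix (M : Matrix ι ι ℂ) (v w : κ → ι → ℂ) (i j : κ) :
    matElem M (v i) (w j) = ((colMatrix v)ᴴ * M * colMatrix w) i j := by
  simp only [matElem, dotProduct, Pi.star_apply, mulVec, Finset.mul_sum, colMatrix, mul_apply,
    conjTranspose_apply, transpose_apply, of_apply, Finset.sum_mul, mul_assoc]
  exact Finset.sum_comm

theorem ONFam.conjTranspose_mul_colMatrix [DecidableEq κ] {v : κ → ι → ℂ} (hv : ONFam v) :
    (colMatrix v)ᴴ * colMatrix v = 1 := by
  ext i j
  simpa [colMatrix, mul_apply, one_apply, dotProduct] using hv i j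

theorem ONFam.colMatrix_mem_unitaryGroup [DecidableEq ι] {v : ι → ι → ℂ} (hv : ONFam v) :
    colMatrix v ∈ unitaryGroup ι ℂ :=
  mem_unitaryGroup_iff'.mpr hv.conjTranspose_mul_colMatrix

theorem sum_smul_ketbra [Fintype κ] [DecidableEq κ] (c : κ → ℂ) (v : κ → ι → ℂ) :
    ∑ k, c k • ketbra (v k) (v k) = colMatrix v * diagonal c * (colMatrix v)ᴴ := by
  ext i j
  simp only [ketbra, Matrix.sum_apply, Matrix.smul_apply, vecMulVec_apply, Pi.star_apply,
    smul_eq_mul, colMatrix, mul_apply, transpose_apply, of_apply, diagonal_apply, mul_ite, mul_zero,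
    Finset.sum_ite_eq', Finset.mem_univ, if_true, conjTranspose_apply]
  exact Finset.sum_congr rfl fun k _ => by ring

end Coordinates

section Trace

variable {ι : Type*} [Fintype ι]

theorem trace_mul_mul_eq_sum (A B C : Matrix ι ι ℂ) :
    trace (A * B * C) = ∑ i, ∑ j, ∑ k, A i j * B j k * C k i := by
  simp only [trace, Matrix.diag, mul_apply, Finset.sum_mul]
  exact Finset.sum_congr rfl fun _ _ => Finset.sum_comm

theorem re_trace_mul_of_isHermitian {H : Matrix ι ι ℂ} (hH : H.IsHermitian) (X : Matrix ι ι ℂ) :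
    (trace (X * H)).re = (trace (((1/2 : ℂ) • (X + Xᴴ)) * H)).re := by
  have hconj : trace (Xᴴ * H) = star (trace (X * H)) := by
    rw [← trace_conjTranspose, conjTranspose_mul, hH.eq, trace_mul_comm]
  rw [smul_mul, add_mul, trace_smul, trace_add, hconj, Complex.star_def, Complex.add_conj]
  simp

theorem trace_diagonal_mul_mul_diagonal_mul_conjTranspose [DecidableEq ι] (a u : ι → ℝ)
    (Y : Matrix ι ι ℂ) :
    trace (diagonal (fun k => (a k : ℂ)) * Y * diagonal (fun l => (u l : ℂ)) * Yᴴ)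
      = ((Y.map Complex.normSq *ᵥ u) ⬝ᵥ a : ℝ) := by
  simp only [trace, Matrix.diag, mul_apply, dotProduct, mulVec, map_apply, conjTranspose_apply,
    Finset.sum_mul, diagonal_apply, ite_mul, mul_ite, zero_mul, mul_zero, Finset.sum_ite_eq,
    Finset.sum_ite_eq', Finset.mem_univ, if_true]
  push_cast
  refine Finset.sum_congr rfl fun k _ => Finset.sum_congr rfl fun l _ => ?_
  rw [← Complex.mul_conj, ← Complex.star_def]
  ring

end Trace

section ExponentialUtility

variable {ι : Type*} [DecidableEq ι]

def expDiag (ε : ι → ℝ) (t : ℝ) : Matrix ι ι ℂ :=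
  diagonal fun k => (Real.exp (t * ε k) : ℂ)

theorem isHermitian_expDiag (ε : ι → ℝ) (t : ℝ) : (expDiag ε t).IsHermitian :=
  isHermitian_diagonal_iff.mpr fun _ => Complex.conj_ofReal _

theorem expUtility_apply_sub (r q x y z : ℝ) :
    expUtility r (q * x + (1 - q) * y - z)
      = (1 - Real.exp (-(r * q) * x) * Real.exp (-(r * (1 - q)) * y) * Real.exp (r * z)) / r := by
  simp only [expUtility, ← Real.exp_add]
  ring_nf

theorem sum_re_mul_expUtility [Fintype ι] (r q : ℝ) (ε : ι → ℝ)
    {P W Ψ : Matrix ι ι ℂ} (hP : P.IsHermitian) (htr : P.trace = 1) (hW : W ∈ unitaryGroup ι ℂ)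
    {u : ι → ℝ}
    (hspec : (1/2 : ℂ) • (expDiag ε (-(r * q)) * P * expDiag ε (-(r * (1 - q))) +
        expDiag ε (-(r * (1 - q))) * P * expDiag ε (-(r * q)))
      = Ψ * diagonal (fun l => (u l : ℂ)) * Ψᴴ) :
    ∑ i, ∑ j, ∑ k, (P i j * Wᴴ j k * W k i).re * expUtility r (q * ε i + (1 - q) * ε j - ε k)
      = 1/r * (1 - ((W * Ψ).map Complex.normSq *ᵥ u) ⬝ᵥ fun k => Real.exp (r * ε k)) := by
  set D₁ := expDiag ε (-(r * q))
  set D₂ := expDiag ε (-(r * (1 - q)))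
  set D₃ := expDiag ε r
  have hsplit : ∑ i, ∑ j, ∑ k,
      (P i j * Wᴴ j k * W k i).re * expUtility r (q * ε i + (1 - q) * ε j - ε k)
        = 1/r * ((trace (P * Wᴴ * W)).re - (trace (D₁ * P * D₂ * Wᴴ * (D₃ * W))).re) := by
    simp only [trace_mul_mul_eq_sum, D₁, D₂, D₃, expDiag, diagonal_mul, mul_diagonal,
      expUtility_apply_sub, Complex.re_sum, Finset.mul_sum, ← Finset.sum_sub_distrib]
    refine Finset.sum_congr rfl fun i _ => Finset.sum_congr rfl fun j _ =>
      Finset.sum_congr rfl fun k _ => ?_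
    have hreal (a b c : ℝ) (x y z : ℂ) :
        ((a : ℂ) * x * b * y * (c * z)).re = a * b * c * (x * y * z).re := by
      rw [← Complex.re_ofReal_mul]
      push_cast
      ring_nf
    rw [hreal]
    ring
  have hunit : trace (P * Wᴴ * W) = 1 := by
    rw [Matrix.mul_assoc, ← star_eq_conjTranspose, Unitary.star_mul_self_of_mem hW, mul_one, htr]
  have hX : (D₁ * P * D₂)ᴴ = D₂ * P * D₁ := by
    have hD₁ : D₁ᴴ = D₁ := (isHermitian_expDiag ε _).eq
    have hD₂ : D₂ᴴ = D₂ := (isHermitian_expDiag ε _).eq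
    simp only [conjTranspose_mul, hD₁, hD₂, hP.eq, Matrix.mul_assoc]
  have hsym : (trace (D₁ * P * D₂ * Wᴴ * (D₃ * W))).re
      = ((W * Ψ).map Complex.normSq *ᵥ u) ⬝ᵥ fun k => Real.exp (r * ε k) := calc
    _ = (trace (D₁ * P * D₂ * (Wᴴ * D₃ * W))).re := by simp only [Matrix.mul_assoc]
    _ = (trace ((1/2 : ℂ) • (D₁ * P * D₂ + (D₁ * P * D₂)ᴴ) * (Wᴴ * D₃ * W))).re :=
      re_trace_mul_of_isHermitian (isHermitian_conjTranspose_mul_mul W (isHermitian_expDiag ε r)) _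
    _ = (trace (D₃ * (W * Ψ) * diagonal (fun l => (u l : ℂ)) * (W * Ψ)ᴴ)).re := by
      rw [hX, hspec, conjTranspose_mul, trace_mul_comm]
      simp only [Matrix.mul_assoc]
      rw [trace_mul_comm]
      simp only [Matrix.mul_assoc]
    _ = _ := by
      rw [show D₃ = diagonal fun k => (Real.exp (r * ε k) : ℂ) from rfl,
        trace_diagonal_mul_mul_diagonal_mul_conjTranspose, Complex.ofReal_re]
  rw [hsplit, hunit, hsym, Complex.one_re]

end ExponentialUtility

theorem antitone_neg_inv_mul_exp_mul {r : ℝ} (hr : r ≠ 0) :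
    Antitone fun x : ℝ => -(r⁻¹ * Real.exp (r * x)) := by
  intro x y hxy
  refine neg_le_neg ?_
  rcases hr.lt_or_gt with h | h
  · exact mul_le_mul_of_nonpos_left
      (Real.exp_le_exp.mpr (mul_le_mul_of_nonpos_left hxy h.le)) (inv_lt_zero.mpr h).le
  · exact mul_le_mul_of_nonneg_left
      (Real.exp_le_exp.mpr (mul_le_mul_of_nonneg_left hxy h.le)) (inv_pos.mpr h).le

section Eigenbasis

variable {n : ℕ}

theorem expHam_eq_colMatrix (ε : Fin n → ℝ) (v : Fin n → Fin n → ℂ) (t : ℝ) :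
    expHam ε v t = colMatrix v * expDiag ε t * (colMatrix v)ᴴ :=
  sum_smul_ketbra _ _

theorem expUtil_eq_sum_colMatrix (u : ℝ → ℝ) (q : ℝ) (ε : Fin n → ℝ) (v : Fin n → Fin n → ℂ)
    (ρ U : Matrix (Fin n) (Fin n) ℂ) :
    expUtil u q ε v ρ U = ∑ i, ∑ j, ∑ k,
      (((colMatrix v)ᴴ * ρ * colMatrix v) i j * ((colMatrix v)ᴴ * U * colMatrix v)ᴴ j k *
        ((colMatrix v)ᴴ * U * colMatrix v) k i).re * u (q * ε i + (1 - q) * ε j - ε k) := by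
  simp only [expUtil, matElem_eq_colMatrix, conjTranspose_mul, conjTranspose_conjTranspose,
    Matrix.mul_assoc]

theorem expUtil_expUtility_eq (r q : ℝ) (ε : Fin n → ℝ) {v φ : Fin n → Fin n → ℂ} (hv : ONFam v)
    {ρ : Matrix (Fin n) (Fin n) ℂ} (hρ : ρ.IsHermitian) (htr : ρ.trace = 1) {u : Fin n → ℝ}
    (hspec : (1/2 : ℂ) • (expHam ε v (-(r * q)) * ρ * expHam ε v (-(r * (1 - q))) +
        expHam ε v (-(r * (1 - q))) * ρ * expHam ε v (-(r * q)))
      = ∑ k, (u k : ℂ) • ketbra (φ k) (φ k))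
    {U : Matrix (Fin n) (Fin n) ℂ} (hU : U ∈ unitaryGroup (Fin n) ℂ) :
    expUtil (expUtility r) q ε v ρ U
      = 1/r * (1 - (((colMatrix v)ᴴ * U * colMatrix φ).map Complex.normSq *ᵥ u) ⬝ᵥ
          fun k => Real.exp (r * ε k)) := by
  rw [expHam_eq_colMatrix, expHam_eq_colMatrix, sum_smul_ketbra] at hspec
  set V := colMatrix v
  have hV : V ∈ unitaryGroup (Fin n) ℂ := hv.colMatrix_mem_unitaryGroup
  have hVV : Vᴴ * V = 1 := hv.conjTranspose_mul_colMatrix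
  have hVV' : ∀ X, Vᴴ * (V * X) = X := fun X => by rw [← Matrix.mul_assoc, hVV, Matrix.one_mul]
  have hY : Vᴴ * U * colMatrix φ = (Vᴴ * U * V) * (Vᴴ * colMatrix φ) := by
    rw [Matrix.mul_assoc _ V, ← Matrix.mul_assoc V, ← star_eq_conjTranspose,
      Unitary.mul_star_self_of_mem hV, Matrix.one_mul]
  rw [expUtil_eq_sum_colMatrix, hY]
  refine sum_re_mul_expUtility r q ε (isHermitian_conjTranspose_mul_mul V hρ) ?_
    (mul_mem (mul_mem (Unitary.star_mem hV) hU) hV) ?_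
  · rw [trace_mul_cycle, ← star_eq_conjTranspose, Unitary.mul_star_self_of_mem hV,
      Matrix.one_mul, htr]
  · have := congrArg (fun M => Vᴴ * M * V) hspec
    simpa only [Matrix.mul_add, Matrix.add_mul, Matrix.mul_smul, Matrix.smul_mul,
      Matrix.mul_assoc, hVV, hVV', Matrix.mul_one, conjTranspose_mul,
      conjTranspose_conjTranspose] using this

end Eigenbasis

/-- for the exponential utility with `r ≠ 0` and arbitrary `q`, the optimal
expected utility equals `(1/r)(1 - ∑ₖ uₖ e^{r εₖ})` where the `uₖ` are the decreasingly
ordered eigenvalues of `ρ̃ = (e^{-rqH_S} ρ e^{-r(1-q)H_S} + e^{-r(1-q)H_S} ρ e^{-rqH_S})/2`. -/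
theorem stmt17 {dS : ℕ} (r : ℝ) (hr : r ≠ 0) (q : ℝ)
    (ε : Fin dS → ℝ) (hε : StrictMono ε)
    (v : Fin dS → Fin dS → ℂ) (hv : ONFam v)
    (ρ : Matrix (Fin dS) (Fin dS) ℂ) (hρ : IsDensity ρ)
    (uvals : Fin dS → ℝ) (φ : Fin dS → Fin dS → ℂ)
    (hφ : ONFam φ) (hdec : Antitone uvals)
    (hspec : (1/2 : ℂ) • (expHam ε v (-(r * q)) * ρ * expHam ε v (-(r * (1 - q))) +
        expHam ε v (-(r * (1 - q))) * ρ * expHam ε v (-(r * q)))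
      = ∑ k, (uvals k : ℂ) • ketbra (φ k) (φ k)) :
    IsGreatest
      {x : ℝ | ∃ U ∈ Matrix.unitaryGroup (Fin dS) ℂ,
        x = expUtil (expUtility r) q ε v ρ U}
      ((1/r) * (1 - ∑ k, uvals k * Real.exp (r * ε k))) := by
  have hformula {U} (hU : U ∈ unitaryGroup (Fin dS) ℂ) :=
    expUtil_expUtility_eq r q ε hv hρ.1.isHermitian hρ.2 hspec hU
  have hV := hv.colMatrix_mem_unitaryGroup
  have hΦ := hφ.colMatrix_mem_unitaryGroup
  have hU₀ : colMatrix v * (colMatrix φ)ᴴ ∈ unitaryGroup (Fin dS) ℂ :=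
    mul_mem hV (Unitary.star_mem hΦ)
  refine ⟨⟨_, hU₀, ?_⟩, ?_⟩
  · rw [hformula hU₀, ← Matrix.mul_assoc, Matrix.mul_assoc _ _ (colMatrix φ),
      hv.conjTranspose_mul_colMatrix, hφ.conjTranspose_mul_colMatrix, Matrix.one_mul,
      Matrix.map_one _ Complex.normSq_zero Complex.normSq_one, one_mulVec]
    rfl
  · rintro _ ⟨U, hU, rfl⟩
    rw [hformula hU]
    have hrearrange := dotProduct_mulVec_le_of_monovary
      (((antitone_neg_inv_mul_exp_mul hr).comp_monotone hε.monotone).monovary hdec)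
      (map_normSq_mem_doublyStochastic (mul_mem (mul_mem (Unitary.star_mem hV) hU) hΦ))
    have hsum (w : Fin dS → ℝ) : ∑ k, -(r⁻¹ * Real.exp (r * ε k)) * w k
        = -(1/r * ∑ k, w k * Real.exp (r * ε k)) := by
      rw [Finset.mul_sum, ← Finset.sum_neg_distrib]
      exact Finset.sum_congr rfl fun k _ => by ring
    simp only [dotProduct, Function.comp_apply, hsum, star_eq_conjTranspose] at hrearrange ⊢
    linarith

end Daemonic
end
end
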